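/- Let s ∈ (0,1), q ≥ 1, a < b with a, b ≥ 0, and f : ℝ → ℝ twice continuously differentiable on an interval containing [a,b] such that |f''|^q is s-convex in the second sense on [a,b]. Then for p with 1/p + 1/q = 1 (p, q > 1), for all x ∈ [a,b]: |(1/(b−a)) ∫_a^b f(t) dt − f(x) + ((2x−a−b)/2) f'(x)| ≤ (1/(2p+1))^{1/p} · (1/(s+1))^{1/q} · (1/(2(b−a))) · [ (x−a)³ (|f''(x)|^q + |f''(a)|^q)^{1/q} + (b−x)³ (|f''(x)|^q + |f''(b)|^q)^{1/q} ]. -/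

import Mathlib

/-!
Integrating by parts twice turns the left-hand side into
`(∫_a^x (t - a)²/2 f''(t) dt + ∫_x^b (t - b)²/2 f''(t) dt) / (b - a)`. On each piece, Hölder's
inequality separates the kernel, whose `p`-th power integrates to `ℓ^(2p+1)/(2p+1)` over an
interval of length `ℓ`, from `|f''|`; and the Hermite–Hadamard bound for the `s`-convex function
`|f''|^q` gives `∫ |f''|^q ≤ ℓ (|f''(x)|^q + |f''(endpoint)|^q)/(s+1)`.
-/

open MeasureTheory Set intervalIntegral

lemma integral_sub_sq_div_two_mul_eq {f f' f'' : ℝ → ℝ} {c x : ℝ}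
    (hf : ∀ t ∈ uIcc c x, HasDerivAt f (f' t) t) (hf' : ∀ t ∈ uIcc c x, HasDerivAt f' (f'' t) t)
    (hf'' : IntervalIntegrable f'' volume c x) :
    ∫ t in c..x, (t - c) ^ 2 / 2 * f'' t
      = (x - c) ^ 2 / 2 * f' x - (x - c) * f x + ∫ t in c..x, f t := by
  have hderiv : ∀ t ∈ uIcc c x, HasDerivAt (fun t => (t - c) ^ 2 / 2 * f' t - (t - c) * f t)
      ((t - c) ^ 2 / 2 * f'' t - f t) t := by
    intro t ht
    refine ((((((hasDerivAt_id t).sub_const c).pow 2).div_const 2).mul (hf' t ht)).sub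
      (((hasDerivAt_id t).sub_const c).mul (hf t ht))).congr_deriv ?_
    simp only [id, Nat.cast_ofNat, Pi.pow_apply]
    ring
  have hfc : IntervalIntegrable f volume c x :=
    ContinuousOn.intervalIntegrable fun t ht => (hf t ht).continuousAt.continuousWithinAt
  have hkernel : IntervalIntegrable (fun t => (t - c) ^ 2 / 2 * f'' t) volume c x :=
    hf''.continuousOn_mul (by fun_prop)
  have hFTC := integral_eq_sub_of_hasDerivAt hderiv (hkernel.sub hfc)
  rw [integral_sub hkernel hfc] at hFTC
  simp only [sub_self, ne_eq, OfNat.ofNat_ne_zero, not_false_eq_true, zero_pow, zero_div, zero_mul,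
    sub_zero] at hFTC
  linarith

lemma average_sub_add_deriv_eq_integral_kernel {f f' f'' : ℝ → ℝ} {a b x : ℝ} (hab : a < b)
    (hx : x ∈ Icc a b) (hf : ∀ t ∈ Icc a b, HasDerivAt f (f' t) t)
    (hf' : ∀ t ∈ Icc a b, HasDerivAt f' (f'' t) t) (hf'' : ContinuousOn f'' (Icc a b)) :
    1 / (b - a) * (∫ t in a..b, f t) - f x + (2 * x - a - b) / 2 * f' x
      = ((∫ t in a..x, (t - a) ^ 2 / 2 * f'' t) + ∫ t in x..b, (t - b) ^ 2 / 2 * f'' t)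
          / (b - a) := by
  have hleft : uIcc a x ⊆ Icc a b := uIcc_subset_Icc (left_mem_Icc.2 hab.le) hx
  have hright : uIcc b x ⊆ Icc a b := uIcc_subset_Icc (right_mem_Icc.2 hab.le) hx
  have hfc : ContinuousOn f (Icc a b) := fun t ht => (hf t ht).continuousAt.continuousWithinAt
  have hba : b - a ≠ 0 := sub_ne_zero.2 hab.ne'
  rw [← integral_add_adjacent_intervals ((hfc.mono hleft).intervalIntegrable)
      ((hfc.mono (uIcc_comm x b ▸ hright)).intervalIntegrable), integral_symm (f := f) b x,
    integral_symm (f := fun t => (t - b) ^ 2 / 2 * f'' t) b x,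
    integral_sub_sq_div_two_mul_eq (fun t ht => hf t (hleft ht)) (fun t ht => hf' t (hleft ht))
      ((hf''.mono hleft).intervalIntegrable),
    integral_sub_sq_div_two_mul_eq (fun t ht => hf t (hright ht)) (fun t ht => hf' t (hright ht))
      ((hf''.mono hright).intervalIntegrable)]
  field_simp
  ring

lemma memLp_restrict_Ioc_of_continuousOn {F : ℝ → ℝ} {c d : ℝ} (hF : ContinuousOn F (Icc c d))
    (p : ENNReal) : MemLp F p (volume.restrict (Ioc c d)) := by
  obtain ⟨C, hC⟩ := isCompact_Icc.exists_bound_of_continuousOn hF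
  refine MemLp.of_bound ((hF.mono Ioc_subset_Icc_self).aestronglyMeasurable measurableSet_Ioc) C ?_
  filter_upwards [ae_restrict_mem measurableSet_Ioc] with t ht
  exact hC t (Ioc_subset_Icc_self ht)

theorem intervalIntegral_mul_le_Lp_mul_Lq_of_nonneg {p q : ℝ} (hpq : p.HolderConjugate q)
    {F G : ℝ → ℝ} {c d : ℝ} (hcd : c ≤ d) (hF : ContinuousOn F (Icc c d))
    (hG : ContinuousOn G (Icc c d)) (hF0 : ∀ t ∈ Icc c d, 0 ≤ F t) (hG0 : ∀ t ∈ Icc c d, 0 ≤ G t) :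
    ∫ t in c..d, F t * G t
      ≤ (∫ t in c..d, F t ^ p) ^ (1 / p) * (∫ t in c..d, G t ^ q) ^ (1 / q) := by
  simp only [integral_of_le hcd]
  have hnonneg : ∀ H : ℝ → ℝ, (∀ t ∈ Icc c d, 0 ≤ H t) → 0 ≤ᵐ[volume.restrict (Ioc c d)] H :=
    fun H hH => (ae_restrict_mem measurableSet_Ioc).mono fun t ht => hH t (Ioc_subset_Icc_self ht)
  exact integral_mul_le_Lp_mul_Lq_of_nonneg hpq (hnonneg F hF0) (hnonneg G hG0)
    (memLp_restrict_Ioc_of_continuousOn hF _) (memLp_restrict_Ioc_of_continuousOn hG _)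

lemma integral_abs_sub_rpow {c d γ r : ℝ} (hcd : c ≤ d) (hγ : γ = c ∨ γ = d) (hr : -1 < r) :
    ∫ t in c..d, |t - γ| ^ r = (d - c) ^ (r + 1) / (r + 1) := by
  have hzero : ∫ u in (0:ℝ)..(d - c), |u| ^ r = (d - c) ^ (r + 1) / (r + 1) := by
    rw [integral_congr (g := fun u => u ^ r) fun u hu => by
      rw [uIcc_of_le (sub_nonneg.2 hcd)] at hu
      rw [abs_of_nonneg hu.1], integral_rpow (Or.inl hr), Real.zero_rpow (by linarith), sub_zero]
  rcases hγ with rfl | rfl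
  · rw [integral_comp_sub_right (fun u => |u| ^ r), sub_self, hzero]
  · simp_rw [abs_sub_comm _ γ]
    rw [integral_comp_sub_left (fun u => |u| ^ r), sub_self, hzero]

/-- `s`-convexity in the second sense (Breckner). -/
def SConvexOn (s : ℝ) (S : Set ℝ) (h : ℝ → ℝ) : Prop :=
  ∀ u ∈ S, ∀ v ∈ S, ∀ l ∈ Icc (0:ℝ) 1, h (l * u + (1 - l) * v) ≤ l ^ s * h u + (1 - l) ^ s * h v

lemma integral_rpow_zero_one {s : ℝ} (hs : -1 < s) : ∫ l in (0:ℝ)..1, l ^ s = 1 / (s + 1) := by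
  rw [integral_rpow (Or.inl hs), Real.one_rpow, Real.zero_rpow (by linarith), sub_zero]

lemma integral_one_sub_rpow_zero_one {s : ℝ} (hs : -1 < s) :
    ∫ l in (0:ℝ)..1, (1 - l) ^ s = 1 / (s + 1) := by
  rw [integral_comp_sub_left (fun l => l ^ s), sub_self, sub_zero, integral_rpow_zero_one hs]

lemma intervalIntegrable_one_sub_rpow {s : ℝ} (hs : -1 < s) :
    IntervalIntegrable (fun l : ℝ => (1 - l) ^ s) volume 0 1 := by
  simpa using ((intervalIntegrable_rpow' hs (a := 0) (b := 1)).comp_sub_left 1).symm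

theorem SConvexOn.integral_le {s : ℝ} {S : Set ℝ} {h : ℝ → ℝ} (hh : SConvexOn s S h)
    (hs : -1 < s) {u v : ℝ} (huv : u ≤ v) (hu : u ∈ S) (hv : v ∈ S)
    (hcont : ContinuousOn h (Icc u v)) :
    ∫ t in u..v, h t ≤ (v - u) * ((h u + h v) / (s + 1)) := by
  have hseg : ∀ l ∈ Icc (0:ℝ) 1, l * v + (1 - l) * u ∈ Icc u v := fun l hl =>
    ⟨by nlinarith [hl.1], by nlinarith [hl.2]⟩
  have hsubst : ∫ t in u..v, h t = (v - u) * ∫ l in (0:ℝ)..1, h (l * v + (1 - l) * u) := by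
    have hparam : (fun l => h (l * v + (1 - l) * u)) = fun l => h ((v - u) * l + u) := by
      funext l; ring_nf
    rw [hparam, ← smul_eq_mul, smul_integral_comp_mul_add]
    simp
  have hcomp : IntervalIntegrable (fun l => h (l * v + (1 - l) * u)) volume 0 1 := by
    refine ContinuousOn.intervalIntegrable ?_
    rw [uIcc_of_le zero_le_one]
    exact hcont.comp (by fun_prop) hseg
  have hbound : IntervalIntegrable (fun l : ℝ => l ^ s * h v + (1 - l) ^ s * h u) volume 0 1 :=
    ((intervalIntegrable_rpow' hs).mul_const _).add
      ((intervalIntegrable_one_sub_rpow hs).mul_const _)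
  have hHadamard : ∫ l in (0:ℝ)..1, h (l * v + (1 - l) * u) ≤ (h u + h v) / (s + 1) := calc
    _ ≤ ∫ l in (0:ℝ)..1, (l ^ s * h v + (1 - l) ^ s * h u) :=
      integral_mono_on zero_le_one hcomp hbound fun l hl => hh v hv u hu l hl
    _ = (h u + h v) / (s + 1) := by
      rw [integral_add ((intervalIntegrable_rpow' hs).mul_const _)
        ((intervalIntegrable_one_sub_rpow hs).mul_const _), intervalIntegral.integral_mul_const,
        intervalIntegral.integral_mul_const,
        integral_rpow_zero_one hs, integral_one_sub_rpow_zero_one hs]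
      ring
  rw [hsubst]
  exact mul_le_mul_of_nonneg_left hHadamard (sub_nonneg.2 huv)

lemma kernel_rpow_mul_rpow_eq {p q : ℝ} (hpq : p.HolderConjugate q) {e M : ℝ} (he : 0 ≤ e)
    (hM : 0 ≤ M) :
    (e ^ (2 * p + 1) / (2 * p + 1)) ^ (1 / p) * (e * M) ^ (1 / q)
      = (1 / (2 * p + 1)) ^ (1 / p) * (e ^ 3 * M ^ (1 / q)) := by
  have hp := hpq.pos
  have hexp : (2 * p + 1) * (1 / p) + 1 / q = 3 := by
    have hinv := hpq.inv_add_inv_eq_one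
    field_simp at hinv ⊢
    linarith
  have hcube : (e ^ (2 * p + 1)) ^ (1 / p) * e ^ (1 / q) = e ^ 3 := by
    rw [← Real.rpow_mul he, ← Real.rpow_add' he (by rw [hexp]; norm_num), hexp]
    norm_num
  rw [div_eq_mul_one_div _ (2 * p + 1), Real.mul_rpow (by positivity) (by positivity),
    Real.mul_rpow he hM, ← hcube]
  ring

theorem abs_integral_sub_sq_div_two_mul_le {p q s : ℝ} (hpq : p.HolderConjugate q) (hs : -1 < s)
    {S : Set ℝ} {g : ℝ → ℝ} (hconv : SConvexOn s S fun t => |g t| ^ q) {c d γ : ℝ} (hcd : c ≤ d)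
    (hγ : γ = c ∨ γ = d) (hc : c ∈ S) (hd : d ∈ S) (hg : ContinuousOn g (Icc c d)) :
    |∫ t in c..d, (t - γ) ^ 2 / 2 * g t|
      ≤ (1 / (2 * p + 1)) ^ (1 / p) * (1 / (s + 1)) ^ (1 / q)
          * ((d - c) ^ 3 * (|g c| ^ q + |g d| ^ q) ^ (1 / q)) / 2 := by
  have hs1 : 0 < s + 1 := by linarith
  have hdc : 0 ≤ d - c := sub_nonneg.2 hcd
  have hp := hpq.pos
  have hHH : ∫ t in c..d, |g t| ^ q ≤ (d - c) * ((|g c| ^ q + |g d| ^ q) / (s + 1)) :=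
    hconv.integral_le hs hcd hc hd (hg.abs.rpow_const fun _ _ => Or.inr hpq.symm.nonneg)
  have hkernel : ∫ t in c..d, ((t - γ) ^ 2) ^ p = (d - c) ^ (2 * p + 1) / (2 * p + 1) := by
    rw [← integral_abs_sub_rpow hcd hγ (by linarith)]
    refine integral_congr fun t _ => ?_
    rw [← sq_abs, ← Real.rpow_natCast, ← Real.rpow_mul (abs_nonneg _)]
    norm_num
  have hHolder := intervalIntegral_mul_le_Lp_mul_Lq_of_nonneg hpq hcd
    (F := fun t => (t - γ) ^ 2) (G := fun t => |g t|) (by fun_prop) hg.abs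
    (fun _ _ => sq_nonneg _) (fun _ _ => abs_nonneg _)
  rw [hkernel] at hHolder
  calc |∫ t in c..d, (t - γ) ^ 2 / 2 * g t|
      ≤ ∫ t in c..d, |(t - γ) ^ 2 / 2 * g t| := abs_integral_le_integral_abs hcd
    _ = (∫ t in c..d, (t - γ) ^ 2 * |g t|) / 2 := by
      rw [← intervalIntegral.integral_div]
      refine integral_congr fun t _ => ?_
      rw [abs_mul, abs_div, abs_of_nonneg (sq_nonneg _), abs_two]
      ring
    _ ≤ ((d - c) ^ (2 * p + 1) / (2 * p + 1)) ^ (1 / p)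
          * ((d - c) * ((|g c| ^ q + |g d| ^ q) / (s + 1))) ^ (1 / q) / 2 := by
      gcongr
      refine hHolder.trans (mul_le_mul_of_nonneg_left ?_ (by positivity))
      exact Real.rpow_le_rpow (integral_nonneg hcd fun t _ => by positivity) hHH
        (by have := hpq.symm.pos; positivity)
    _ = _ := by
      rw [kernel_rpow_mul_rpow_eq hpq hdc (div_nonneg (by positivity) hs1.le),
        div_eq_mul_one_div _ (s + 1), Real.mul_rpow (by positivity) (one_div_pos.2 hs1).le]
      ring

theorem stmt_6_general (f : ℝ → ℝ) (a b : ℝ) (s p q : ℝ) (hs : s ∈ Set.Ioo (0:ℝ) 1)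
    (hp : 1 < p) (hpq : 1/p + 1/q = 1)
    (hab : a < b)
    (U : Set ℝ) (hU : IsOpen U) (hsub : Set.Icc a b ⊆ U) (hf : ContDiffOn ℝ 2 f U)
    (hsc : ∀ u ∈ Set.Icc a b, ∀ v ∈ Set.Icc a b, ∀ l ∈ Set.Icc (0:ℝ) 1,
      |deriv (deriv f) (l*u + (1-l)*v)| ^ q ≤
        l ^ s * |deriv (deriv f) u| ^ q + (1-l) ^ s * |deriv (deriv f) v| ^ q) :
    ∀ x ∈ Set.Icc a b,
      |(1/(b-a)) * (∫ t in a..b, f t) - f x + ((2*x - a - b)/2) * deriv f x|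
        ≤ (1/(2*p+1)) ^ (1/p) * (1/(s+1)) ^ (1/q) * (1/(2*(b-a))) *
            ((x-a)^3 * (|deriv (deriv f) x| ^ q + |deriv (deriv f) a| ^ q) ^ (1/q)
             + (b-x)^3 * (|deriv (deriv f) x| ^ q + |deriv (deriv f) b| ^ q) ^ (1/q)) := by
  intro x hx
  have hpq' : p.HolderConjugate q :=
    Real.holderConjugate_iff.2 ⟨hp, by simpa only [one_div] using hpq⟩
  have hs' : -1 < s := by linarith [hs.1]
  have hf' : ContDiffOn ℝ 1 (deriv f) U := hf.deriv_of_isOpen hU (by norm_num)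
  have hderiv : ∀ t ∈ Icc a b, HasDerivAt f (deriv f t) t := fun t ht =>
    ((hf.differentiableOn (by norm_num)).differentiableAt (hU.mem_nhds (hsub ht))).hasDerivAt
  have hderiv2 : ∀ t ∈ Icc a b, HasDerivAt (deriv f) (deriv (deriv f) t) t := fun t ht =>
    ((hf'.differentiableOn one_ne_zero).differentiableAt (hU.mem_nhds (hsub ht))).hasDerivAt
  have hg : ContinuousOn (deriv (deriv f)) (Icc a b) :=
    (hf'.continuousOn_deriv_of_isOpen hU le_rfl).mono hsub
  have hleft := abs_integral_sub_sq_div_two_mul_le hpq' hs' hsc hx.1 (Or.inl rfl)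
    (left_mem_Icc.2 hab.le) hx (hg.mono (Icc_subset_Icc_right hx.2))
  have hright := abs_integral_sub_sq_div_two_mul_le hpq' hs' hsc hx.2 (Or.inr rfl)
    hx (right_mem_Icc.2 hab.le) (hg.mono (Icc_subset_Icc_left hx.1))
  rw [add_comm (|deriv (deriv f) a| ^ q)] at hleft
  have hba : 0 < b - a := sub_pos.2 hab
  rw [average_sub_add_deriv_eq_integral_kernel hab hx hderiv hderiv2 hg, abs_div, abs_of_pos hba]
  calc _ ≤ (|∫ t in a..x, (t - a) ^ 2 / 2 * deriv (deriv f) t|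
          + |∫ t in x..b, (t - b) ^ 2 / 2 * deriv (deriv f) t|) / (b - a) :=
        div_le_div_of_nonneg_right (abs_add_le _ _) hba.le
    _ ≤ _ := div_le_div_of_nonneg_right (add_le_add hleft hright) hba.le
    _ = _ := by field_simp

theorem stmt_6 (f : ℝ → ℝ) (a b : ℝ) (s p q : ℝ) (hs : s ∈ Set.Ioo (0:ℝ) 1)
    (hp : 1 < p) (hq : 1 < q) (hpq : 1/p + 1/q = 1)
    (ha : 0 ≤ a) (hb : 0 ≤ b) (hab : a < b)
    (U : Set ℝ) (hU : IsOpen U) (hsub : Set.Icc a b ⊆ U) (hf : ContDiffOn ℝ 2 f U)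
    (hsc : ∀ u ∈ Set.Icc a b, ∀ v ∈ Set.Icc a b, ∀ l ∈ Set.Icc (0:ℝ) 1,
      |deriv (deriv f) (l*u + (1-l)*v)| ^ q ≤
        l ^ s * |deriv (deriv f) u| ^ q + (1-l) ^ s * |deriv (deriv f) v| ^ q) :
    ∀ x ∈ Set.Icc a b,
      |(1/(b-a)) * (∫ t in a..b, f t) - f x + ((2*x - a - b)/2) * deriv f x|
        ≤ (1/(2*p+1)) ^ (1/p) * (1/(s+1)) ^ (1/q) * (1/(2*(b-a))) *
            ((x-a)^3 * (|deriv (deriv f) x| ^ q + |deriv (deriv f) a| ^ q) ^ (1/q)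
             + (b-x)^3 * (|deriv (deriv f) x| ^ q + |deriv (deriv f) b| ^ q) ^ (1/q)) :=
  stmt_6_general f a b s p q hs hp hpq hab U hU hsub hf hsc
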